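/- arXiv:2108.03879 — 2 statements merged into one kernel-verified Lean document; each statement's English description precedes it below -/
import Mathlib

section
/- Under the hypotheses of the cSSIM upper bound, |1 − cSSIM(f,g)| ≤ c ‖f − g‖²_{L²(ν)}, where c = (4c₁ + c₂)/(c₁ c₂), i.e. c = 4/c₂ + 1/c₁. -/
open MeasureTheory

noncomputable def mu {α : Type*} [MeasurableSpace α] (ν : Measure α) (f : α → ℝ) : ℝ :=
  ∫ x, f x ∂ν

noncomputable def cov {α : Type*} [MeasurableSpace α] (ν : Measure α) (f g : α → ℝ) : ℝ :=
  ∫ x, (f x - mu ν f) * (g x - mu ν g) ∂ν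

noncomputable def Mlum {α : Type*} [MeasurableSpace α] (ν : Measure α) (f g : α → ℝ)
    (c1 : ℝ) : ℝ :=
  (2 * mu ν f * mu ν g + c1) / ((mu ν f) ^ 2 + (mu ν g) ^ 2 + c1)

noncomputable def Sstr {α : Type*} [MeasurableSpace α] (ν : Measure α) (f g : α → ℝ)
    (c2 : ℝ) : ℝ :=
  (2 * cov ν f g + c2) / (cov ν f f + cov ν g g + c2)

noncomputable def cSSIM {α : Type*} [MeasurableSpace α] (ν : Measure α) (f g : α → ℝ)
    (c1 c2 : ℝ) : ℝ :=
  Mlum ν f g c1 * Sstr ν f g c2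

/-!
Both factors of cSSIM have the shape `(2x + c) / (p + c)` with `0 ≤ p` and `2x ≤ p`, so each
differs from `1` by at most `(p - 2x) / c`. For the luminance factor `p - 2x = (μ_f - μ_g)²`,
and even `|2x| ≤ p`, so that factor lies in `[-1, 1]`; for the structure factor
`p - 2x = Var(f - g)`. The two add up to `‖f - g‖²`, and `|1 - MS| ≤ |1 - M| + |1 - S|`
whenever `|M| ≤ 1`.
-/

open ProbabilityTheory

section RatioBounds

variable {K : Type*} [Field K] [LinearOrder K] [IsStrictOrderedRing K] {x p c : K}

lemma abs_two_mul_add_div_add_le_one (hc : 0 < c) (hx : |2 * x| ≤ p) :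
    |(2 * x + c) / (p + c)| ≤ 1 := by
  have hpc : 0 < p + c := by linarith [abs_nonneg (2 * x)]
  rw [abs_div, abs_of_pos hpc, div_le_one hpc]
  linarith [abs_add_le (2 * x) c, abs_of_pos hc]

lemma abs_one_sub_two_mul_add_div_add_le (hc : 0 < c) (hx : 2 * x ≤ p) (hp : 0 ≤ p) :
    |1 - (2 * x + c) / (p + c)| ≤ (p - 2 * x) / c := by
  have hpc : 0 < p + c := by linarith
  have hdiff : 1 - (2 * x + c) / (p + c) = (p - 2 * x) / (p + c) := by
    field_simp
    ring
  rw [hdiff, abs_of_nonneg (div_nonneg (by linarith) hpc.le)]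
  exact div_le_div_of_nonneg_left (by linarith) hc (by linarith)

lemma abs_one_sub_mul_le {M S : K} (hM : |M| ≤ 1) : |1 - M * S| ≤ |1 - M| + |1 - S| :=
  calc |1 - M * S| = |(1 - M) + M * (1 - S)| := by congr 1; ring
    _ ≤ |1 - M| + |M| * |1 - S| := by rw [← abs_mul]; exact abs_add_le _ _
    _ ≤ |1 - M| + |1 - S| := by gcongr; exact mul_le_of_le_one_left (abs_nonneg _) hM

end RatioBounds

section SSIMFactors

variable {α : Type*} [MeasurableSpace α] {ν : Measure α} {f g : α → ℝ}

lemma abs_Mlum_le_one {c1 : ℝ} (hc1 : 0 < c1) : |Mlum ν f g c1| ≤ 1 := by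
  have hAMGM : |2 * (mu ν f * mu ν g)| ≤ mu ν f ^ 2 + mu ν g ^ 2 := by
    rw [abs_le, ← mul_assoc]
    constructor <;> nlinarith [two_mul_le_add_sq (-mu ν f) (mu ν g),
      two_mul_le_add_sq (mu ν f) (mu ν g)]
  have := abs_two_mul_add_div_add_le_one hc1 hAMGM
  rwa [← mul_assoc] at this

lemma abs_one_sub_Mlum_le {c1 : ℝ} (hc1 : 0 < c1) :
    |1 - Mlum ν f g c1| ≤ (mu ν f - mu ν g) ^ 2 / c1 := by
  have h := abs_one_sub_two_mul_add_div_add_le (x := mu ν f * mu ν g)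
    (p := mu ν f ^ 2 + mu ν g ^ 2) hc1
    (by nlinarith [sq_nonneg (mu ν f - mu ν g)]) (by positivity)
  rw [← mul_assoc] at h
  exact h.trans_eq (by ring)

lemma cov_eq_covariance : cov ν f g = cov[f, g; ν] := rfl

lemma cov_self_eq_variance (hf : AEMeasurable f ν) : cov ν f f = Var[f; ν] :=
  covariance_self hf

lemma abs_one_sub_Sstr_le [IsFiniteMeasure ν] (hf : MemLp f 2 ν) (hg : MemLp g 2 ν)
    {c2 : ℝ} (hc2 : 0 < c2) : |1 - Sstr ν f g c2| ≤ Var[f - g; ν] / c2 := by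
  have hvar : Var[f - g; ν] = cov ν f f + cov ν g g - 2 * cov ν f g := by
    rw [variance_sub hf hg, cov_self_eq_variance hf.aemeasurable,
      cov_self_eq_variance hg.aemeasurable, cov_eq_covariance]
    ring
  have hsum : 0 ≤ cov ν f f + cov ν g g := by
    rw [cov_self_eq_variance hf.aemeasurable, cov_self_eq_variance hg.aemeasurable]
    exact add_nonneg (variance_nonneg _ _) (variance_nonneg _ _)
  unfold Sstr
  rw [hvar]
  exact abs_one_sub_two_mul_add_div_add_le hc2
    (by linarith [variance_nonneg (f - g) ν]) hsum

lemma sq_mu_sub_add_variance_sub [IsProbabilityMeasure ν] (hf : MemLp f 2 ν)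
    (hg : MemLp g 2 ν) :
    (mu ν f - mu ν g) ^ 2 + Var[f - g; ν] = ∫ x, (f x - g x) ^ 2 ∂ν := by
  have hmean : ν[f - g] = mu ν f - mu ν g :=
    integral_sub (hf.integrable one_le_two) (hg.integrable one_le_two)
  rw [variance_eq_sub (hf.sub hg), hmean]
  simp only [add_sub_cancel, Pi.pow_apply, Pi.sub_apply]

end SSIMFactors

theorem stmt_7_general {α : Type*} [MeasurableSpace α] (ν : Measure α) [IsProbabilityMeasure ν]
    (f g : α → ℝ) (hf : MemLp f 2 ν) (hg : MemLp g 2 ν)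
    (c1 c2 : ℝ) (hc1 : 0 < c1) (hc2 : 0 < c2) :
    |1 - cSSIM ν f g c1 c2| ≤ (4 / c2 + 1 / c1) * ∫ x, (f x - g x) ^ 2 ∂ν := by
  set I := ∫ x, (f x - g x) ^ 2 ∂ν
  have hsplit := sq_mu_sub_add_variance_sub hf hg
  have hmean : (mu ν f - mu ν g) ^ 2 ≤ I := by linarith [variance_nonneg (f - g) ν]
  have hvar : Var[f - g; ν] ≤ I := by linarith [sq_nonneg (mu ν f - mu ν g)]
  calc |1 - cSSIM ν f g c1 c2|
      ≤ |1 - Mlum ν f g c1| + |1 - Sstr ν f g c2| := abs_one_sub_mul_le (abs_Mlum_le_one hc1)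
    _ ≤ (mu ν f - mu ν g) ^ 2 / c1 + Var[f - g; ν] / c2 :=
        add_le_add (abs_one_sub_Mlum_le hc1) (abs_one_sub_Sstr_le hf hg hc2)
    _ ≤ I / c1 + I / c2 := by gcongr
    _ ≤ (4 / c2 + 1 / c1) * I := by
        have : 0 ≤ I / c2 := div_nonneg (hmean.trans' (sq_nonneg _)) hc2.le
        rw [add_mul, div_mul_eq_mul_div, one_div_mul_eq_div, mul_div_assoc]
        linarith

theorem stmt_7 {α : Type*} [MeasurableSpace α] (ν : Measure α) [IsProbabilityMeasure ν]
    (f g : α → ℝ) (hf : MemLp f 2 ν) (hg : MemLp g 2 ν)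
    (hf0 : 0 ≤ᵐ[ν] f) (hg0 : 0 ≤ᵐ[ν] g) (c1 c2 : ℝ) (hc1 : 0 < c1) (hc2 : 0 < c2) :
    |1 - cSSIM ν f g c1 c2| ≤ (4 / c2 + 1 / c1) * ∫ x, (f x - g x) ^ 2 ∂ν :=
  stmt_7_general ν f g hf hg c1 c2 hc1 hc2
end

section
/- Let f, g be nonnegative in L²(Ω, ν) with ν a probability measure, c₂ > 0, and suppose ‖f‖_{L²(ν)}, ‖g‖_{L²(ν)} ≤ R. Then |1 − cSSIM(f,g)| ≥ (1/(4R² + c₂))·(‖f − g‖²_{L²(ν)} − (μ_f − μ_g)²). -/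
/-!
Write `a, b` for the means, `A, B` for the variances and `C` for the covariance of `f, g`, so that
`E := A + B - 2C = Var[f - g] = ‖f - g‖² - (a - b)²`. The structure factor satisfies
`1 - S = E / (A + B + c₂)`, and the luminance factor `M` lies in `[0, 1]` because `a, b ≥ 0`.
Hence `1 - M S = M (1 - S) + (1 - M)` is a convex combination of `1 - S` and `1`, both of which
dominate `t := E / (4R² + c₂)`: the first since `A + B ≤ 2R²`, the second since
`E ≤ 2(A + B) ≤ 4R²`.
-/

open MeasureTheory

open ProbabilityTheory

lemma le_one_sub_mul_of_le {M S t : ℝ} (hM₀ : 0 ≤ M) (hM₁ : M ≤ 1) (ht₁ : t ≤ 1)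
    (htS : t ≤ 1 - S) : t ≤ 1 - M * S := by
  have h₁ := mul_le_mul_of_nonneg_left htS hM₀
  have h₂ := mul_le_mul_of_nonneg_left ht₁ (sub_nonneg.2 hM₁)
  linarith

section

variable {α : Type*} [MeasurableSpace α] {ν : Measure α} {f g : α → ℝ}

lemma Mlum_nonneg {c1 : ℝ} (hf : 0 ≤ mu ν f) (hg : 0 ≤ mu ν g) (hc1 : 0 ≤ c1) :
    0 ≤ Mlum ν f g c1 := by
  unfold Mlum
  positivity

lemma Mlum_le_one {c1 : ℝ} (hc1 : 0 < c1) : Mlum ν f g c1 ≤ 1 := by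
  unfold Mlum
  rw [div_le_one (by positivity)]
  nlinarith [sq_nonneg (mu ν f - mu ν g)]

lemma one_sub_Sstr [IsFiniteMeasure ν] (hf : MemLp f 2 ν) (hg : MemLp g 2 ν) {c2 : ℝ}
    (hc2 : 0 < c2) : 1 - Sstr ν f g c2 = Var[f - g; ν] / (Var[f; ν] + Var[g; ν] + c2) := by
  have hden : 0 < Var[f; ν] + Var[g; ν] + c2 := by
    linarith [variance_nonneg f ν, variance_nonneg g ν]
  simp only [Sstr, cov_eq_covariance]
  rw [covariance_self hf.aemeasurable, covariance_self hg.aemeasurable, variance_sub hf hg]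
  field_simp
  ring

lemma variance_sub_le [IsFiniteMeasure ν] (hf : MemLp f 2 ν) (hg : MemLp g 2 ν) :
    Var[f - g; ν] ≤ 2 * (Var[f; ν] + Var[g; ν]) := by
  have hsum := variance_add hf hg
  rw [variance_sub hf hg]
  linarith [variance_nonneg (f + g) ν]

lemma variance_sub_eq_integral_sq_sub [IsProbabilityMeasure ν] (hf : MemLp f 2 ν)
    (hg : MemLp g 2 ν) :
    Var[f - g; ν] = ∫ x, (f x - g x) ^ 2 ∂ν - (mu ν f - mu ν g) ^ 2 := by
  rw [variance_eq_sub (hf.sub hg), mu, mu, ← integral_sub (hf.integrable one_le_two)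
    (hg.integrable one_le_two)]
  rfl

lemma variance_le_sq_of_sqrt_integral_sq_le [IsProbabilityMeasure ν]
    (hf : AEStronglyMeasurable f ν) {R : ℝ} (hfR : Real.sqrt (∫ x, f x ^ 2 ∂ν) ≤ R) : Var[f; ν] ≤ R ^ 2 :=
  (variance_le_expectation_sq hf).trans (Real.sqrt_le_iff.mp hfR).2

end

theorem stmt_10_general {α : Type*} [MeasurableSpace α] (ν : Measure α) [IsProbabilityMeasure ν]
    (f g : α → ℝ) (hf : MemLp f 2 ν) (hg : MemLp g 2 ν)
    (hf0 : 0 ≤ᵐ[ν] f) (hg0 : 0 ≤ᵐ[ν] g) (c1 c2 R : ℝ)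
    (hc1 : 0 < c1) (hc2 : 0 < c2)
    (hfR : Real.sqrt (∫ x, (f x) ^ 2 ∂ν) ≤ R)
    (hgR : Real.sqrt (∫ x, (g x) ^ 2 ∂ν) ≤ R) :
    (1 / (4 * R ^ 2 + c2)) * ((∫ x, (f x - g x) ^ 2 ∂ν) - (mu ν f - mu ν g) ^ 2) ≤
      |1 - cSSIM ν f g c1 c2| := by
  have hVf := variance_le_sq_of_sqrt_integral_sq_le hf.aestronglyMeasurable hfR
  have hVg := variance_le_sq_of_sqrt_integral_sq_le hg.aestronglyMeasurable hgR
  have hE := variance_sub_le hf hg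
  rw [← variance_sub_eq_integral_sq_sub hf hg, one_div_mul_eq_div]
  refine le_trans (le_one_sub_mul_of_le (Mlum_nonneg (integral_nonneg_of_ae hf0)
    (integral_nonneg_of_ae hg0) hc1.le) (Mlum_le_one hc1) ?_ ?_) (le_abs_self _)
  · rw [div_le_one (by positivity)]
    linarith
  · rw [one_sub_Sstr hf hg hc2]
    exact div_le_div_of_nonneg_left (variance_nonneg _ _)
      (by linarith [variance_nonneg f ν, variance_nonneg g ν]) (by linarith [sq_nonneg R])

theorem stmt_10 {α : Type*} [MeasurableSpace α] (ν : Measure α) [IsProbabilityMeasure ν]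
    (f g : α → ℝ) (hf : MemLp f 2 ν) (hg : MemLp g 2 ν)
    (hf0 : 0 ≤ᵐ[ν] f) (hg0 : 0 ≤ᵐ[ν] g) (c1 c2 R : ℝ)
    (hc1 : 0 < c1) (hc2 : 0 < c2) (hR : 0 < R)
    (hfR : Real.sqrt (∫ x, (f x) ^ 2 ∂ν) ≤ R)
    (hgR : Real.sqrt (∫ x, (g x) ^ 2 ∂ν) ≤ R) :
    (1 / (4 * R ^ 2 + c2)) * ((∫ x, (f x - g x) ^ 2 ∂ν) - (mu ν f - mu ν g) ^ 2) ≤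
      |1 - cSSIM ν f g c1 c2| :=
  stmt_10_general ν f g hf hg hf0 hg0 c1 c2 R hc1 hc2 hfR hgR
end
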